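/- Let A be Metzler and J nonnegative, T̄ > 0. Suppose there exist a differentiable function ζ : [0, T̄] → ℝ^n with ζ(T̄) entrywise strictly positive and ε > 0 such that ζ(τ)ᵀA − ζ'(τ)ᵀ ≤ 0 componentwise for all τ ∈ [0, T̄], and ζ(T̄)ᵀJ − ζ(0)ᵀ + ε·𝟙ᵀ ≤ 0 componentwise. Then λ := ζ(T̄) satisfies λᵀ(J·exp(A·T̄) − I) < 0 componentwise. -/

import Mathlib

/-!
The row vector `τ ↦ ζ(τ) exp((T̄ - τ) A)` is nondecreasing on `[0, T̄]`: its derivative is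
`(ζ'(τ) - ζ(τ) A) exp((T̄ - τ) A)`, and the exponential of a Metzler matrix is entrywise
nonnegative. Comparing endpoints gives `ζ(0) exp(A T̄) ≤ ζ(T̄)`. The jump condition
`ζ(T̄) J ≤ ζ(0) - ε 𝟙` then yields `λ J exp(A T̄) ≤ λ - ε 𝟙 exp(A T̄)`, and every column of the
invertible, entrywise nonnegative matrix `exp(A T̄)` has positive sum.
-/

open Matrix NormedSpace Set

namespace Matrix

variable {m : Type*}

def IsMetzler (A : Matrix m m ℝ) : Prop := ∀ i j, i ≠ j → 0 ≤ A i j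

theorem IsMetzler.smul {A : Matrix m m ℝ} (hA : A.IsMetzler) {t : ℝ} (ht : 0 ≤ t) :
    (t • A).IsMetzler :=
  fun i j hij => mul_nonneg ht (hA i j hij)

variable [Fintype m] [DecidableEq m]

section LinftyOp

attribute [local instance] Matrix.linftyOpNormedRing Matrix.linftyOpNormedAlgebra

theorem exp_apply_nonneg_of_nonneg {M : Matrix m m ℝ} (hM : ∀ i j, 0 ≤ M i j) (i j : m) :
    0 ≤ exp M i j := by
  have hsum := Pi.hasSum.mp (Pi.hasSum.mp (exp_series_hasSum_exp' (𝕂 := ℝ) M) i) j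
  exact hsum.nonneg fun k => mul_nonneg (by positivity) (pow_apply_nonneg hM k i j)

theorem exp_add_smul_one (M : Matrix m m ℝ) (c : ℝ) : exp (M + c • 1) = Real.exp c • exp M := by
  have hscalar : exp (algebraMap ℝ (Matrix m m ℝ) c) = algebraMap ℝ _ (Real.exp c) := by
    rw [Real.exp_eq_exp_ℝ]
    exact (algebraMap_exp_comm c).symm
  rw [← Algebra.algebraMap_eq_smul_one,
    exp_add_of_commute _ _ (Algebra.commute_algebraMap_right _ _), hscalar,
    ← Algebra.commutes, ← Algebra.smul_def]

theorem hasDerivAt_exp_smul_apply (A : Matrix m m ℝ) (i j : m) (t : ℝ) :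
    HasDerivAt (fun τ : ℝ => exp (τ • A) i j) ((A * exp (t • A)) i j) t :=
  (entryLinearMap ℝ ℝ i j).toContinuousLinearMap.hasFDerivAt.comp_hasDerivAt t
    (hasDerivAt_exp_smul_const' A t)

end LinftyOp

theorem IsMetzler.exp_apply_nonneg {M : Matrix m m ℝ} (hM : M.IsMetzler) (i j : m) :
    0 ≤ exp M i j := by
  -- shifting by a multiple of the identity makes `M` entrywise nonnegative
  set c := ∑ k, |M k k|
  have hshift : ∀ i j, 0 ≤ (M + c • 1) i j := by
    intro i j
    rcases eq_or_ne i j with rfl | hij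
    · have : |M i i| ≤ c :=
        Finset.single_le_sum (fun k _ => abs_nonneg (M k k)) (Finset.mem_univ i)
      simp only [add_apply, smul_apply, one_apply_eq, smul_eq_mul, mul_one]
      linarith [neg_abs_le (M i i)]
    · simpa [one_apply, hij] using hM i j hij
  have hexp : exp M = Real.exp (-c) • exp (M + c • 1) := by
    rw [← exp_add_smul_one, add_assoc, ← add_smul, add_neg_cancel, zero_smul, add_zero]
  rw [hexp, smul_apply, smul_eq_mul]
  exact mul_nonneg (Real.exp_nonneg _) (exp_apply_nonneg_of_nonneg hshift i j)

theorem exists_exp_apply_ne_zero (M : Matrix m m ℝ) (j : m) : ∃ k, exp M k j ≠ 0 := by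
  by_contra! h
  have := congr_fun₂ (nonsing_inv_mul _ ((isUnit_exp M).map detMonoidHom)) j j
  simp [mul_apply, h] at this

theorem IsMetzler.sum_exp_apply_pos {M : Matrix m m ℝ} (hM : M.IsMetzler) (j : m) :
    0 < ∑ k, exp M k j := by
  obtain ⟨k, hk⟩ := exists_exp_apply_ne_zero M j
  exact Finset.sum_pos' (fun l _ => hM.exp_apply_nonneg l j)
    ⟨k, Finset.mem_univ k, (hM.exp_apply_nonneg k j).lt_of_ne' hk⟩

theorem hasDerivAt_vecMul_exp_smul_sub {A : Matrix m m ℝ} {ζ : ℝ → m → ℝ} {ζ' : m → ℝ}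
    {b t : ℝ} (hζ : HasDerivAt ζ ζ' t) :
    HasDerivAt (fun τ => ζ τ ᵥ* exp ((b - τ) • A))
      ((ζ' - ζ t ᵥ* A) ᵥ* exp ((b - t) • A)) t := by
  refine hasDerivAt_pi.2 fun j => ?_
  have hentry (k : m) : HasDerivAt (fun τ => exp ((b - τ) • A) k j)
      ((A * exp ((b - t) • A)) k j * -1) t :=
    (hasDerivAt_exp_smul_apply A k j (b - t)).comp t ((hasDerivAt_id t).const_sub b)
  have hsum := HasDerivAt.fun_sum (u := Finset.univ) fun k _ =>
    ((hasDerivAt_pi.1 hζ) k).fun_mul (hentry k)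
  refine hsum.congr_deriv ?_
  rw [sub_vecMul, vecMul_vecMul]
  simp only [Pi.sub_apply, vecMul, dotProduct, ← Finset.sum_sub_distrib]
  exact Finset.sum_congr rfl fun k _ => by ring

-- Comparison principle: a supersolution of `ζ' = ζ A` on `[a, b]` dominates at time `b`
-- the solution started from `ζ a`.
theorem IsMetzler.vecMul_exp_smul_le {A : Matrix m m ℝ} (hA : A.IsMetzler)
    {ζ ζ' : ℝ → m → ℝ} {a b : ℝ} (hab : a ≤ b)
    (hder : ∀ τ ∈ Icc a b, HasDerivAt ζ (ζ' τ) τ) (hsuper : ∀ τ ∈ Icc a b, ζ τ ᵥ* A ≤ ζ' τ) :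
    ζ a ᵥ* exp ((b - a) • A) ≤ ζ b := by
  intro j
  have hderiv (τ) (hτ : τ ∈ Icc a b) :=
    hasDerivAt_pi.1 (hasDerivAt_vecMul_exp_smul_sub (A := A) (b := b) (hder τ hτ)) j
  have hmono : MonotoneOn (fun τ => (ζ τ ᵥ* exp ((b - τ) • A)) j) (Icc a b) := by
    refine monotoneOn_of_hasDerivWithinAt_nonneg (convex_Icc a b)
      (fun τ hτ => (hderiv τ hτ).continuousAt.continuousWithinAt)
      (fun τ hτ => (hderiv τ (interior_subset hτ)).hasDerivWithinAt) fun τ hτ => ?_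
    have hτ := interior_subset hτ
    exact dotProduct_nonneg_of_nonneg (sub_nonneg.2 (hsuper τ hτ))
      fun k => (hA.smul (sub_nonneg.2 hτ.2)).exp_apply_nonneg k j
  simpa using hmono (left_mem_Icc.2 hab) (right_mem_Icc.2 hab) hab

end Matrix

theorem lift_implies_constant_dwell_time_general (n : ℕ) (A J : Matrix (Fin n) (Fin n) ℝ)
    (hA : ∀ i j, i ≠ j → 0 ≤ A i j)
    (T : ℝ) (hT : 0 < T)
    (ζ ζ' : ℝ → Fin n → ℝ)
    (hder : ∀ τ ∈ Set.Icc (0 : ℝ) T, HasDerivAt ζ (ζ' τ) τ)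
    (ε : ℝ) (hε : 0 < ε)
    (hflow : ∀ τ ∈ Set.Icc (0 : ℝ) T, ∀ j, Matrix.vecMul (ζ τ) A j - ζ' τ j ≤ 0)
    (hjump : ∀ j, Matrix.vecMul (ζ T) J j - ζ 0 j + ε ≤ 0) :
    ∀ j, Matrix.vecMul (ζ T) (J * exp (T • A)) j < ζ T j := by
  intro j
  have hMetzler : A.IsMetzler := hA
  have hflowT : ζ 0 ᵥ* exp (T • A) ≤ ζ T := by
    simpa using hMetzler.vecMul_exp_smul_le hT.le hder fun τ hτ k => sub_nonpos.1 (hflow τ hτ k)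
  set col : Fin n → ℝ := fun k => exp (T • A) k j
  have hcol : 0 ≤ col := fun k => (hMetzler.smul hT.le).exp_apply_nonneg k j
  have hjump' : ζ T ᵥ* J ≤ ζ 0 - ε • 1 := fun k => by
    simp only [Pi.sub_apply, Pi.smul_apply, Pi.one_apply, smul_eq_mul, mul_one]
    linarith [hjump k]
  calc (ζ T ᵥ* (J * exp (T • A))) j = (ζ T ᵥ* J) ⬝ᵥ col := by rw [← vecMul_vecMul]; rfl
    _ ≤ (ζ 0 - ε • 1) ⬝ᵥ col := dotProduct_le_dotProduct_of_nonneg_right hjump' hcol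
    _ = ζ 0 ⬝ᵥ col - ε * ∑ k, col k := by
      rw [sub_dotProduct, smul_dotProduct, one_dotProduct, smul_eq_mul]
    _ < ζ 0 ⬝ᵥ col := sub_lt_self _ (mul_pos hε ((hMetzler.smul hT.le).sum_exp_apply_pos j))
    _ ≤ ζ T j := hflowT j

/-- The lifted (clock-dependent) constant dwell-time conditions imply the
finite-dimensional condition with `λ = ζ(T̄)`. -/
theorem lift_implies_constant_dwell_time (n : ℕ) (A J : Matrix (Fin n) (Fin n) ℝ)
    (hA : ∀ i j, i ≠ j → 0 ≤ A i j) (hJ : ∀ i j, 0 ≤ J i j)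
    (T : ℝ) (hT : 0 < T)
    (ζ ζ' : ℝ → Fin n → ℝ)
    (hder : ∀ τ ∈ Set.Icc (0 : ℝ) T, HasDerivAt ζ (ζ' τ) τ)
    (hpos : ∀ i, 0 < ζ T i)
    (ε : ℝ) (hε : 0 < ε)
    (hflow : ∀ τ ∈ Set.Icc (0 : ℝ) T, ∀ j, Matrix.vecMul (ζ τ) A j - ζ' τ j ≤ 0)
    (hjump : ∀ j, Matrix.vecMul (ζ T) J j - ζ 0 j + ε ≤ 0) :
    ∀ j, Matrix.vecMul (ζ T) (J * exp (T • A)) j < ζ T j :=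
  lift_implies_constant_dwell_time_general n A J hA T hT ζ ζ' hder ε hε hflow hjump
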